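/- arXiv:1905.11269 — 4 statements merged into one kernel-verified Lean document; each statement's English description precedes it below -/
import Mathlib

section
/- There exists a real n₁ such that for every real x ≥ n₁ the equation x = (1/2)·(π n₀ e^{(L − log N)/2} − k/2 + 1)·L has exactly one solution L > 0. -/
/-!
Write `f L = c · g(L) · L` with `g` monotone and unbounded. Once `g` is positive, `f` is strictly
increasing and tends to infinity, so every large `x` has exactly one preimage in that range; taking
`x` above the maximum of `f` on the remaining compact interval rules out any other positive
preimage.
-/

open Filter Set

theorem Continuous.eventually_existsUnique_eq_of_strictMonoOn_Ici {f : ℝ → ℝ} (hf : Continuous f)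
    (htop : Tendsto f atTop atTop) {b : ℝ} (hmono : StrictMonoOn f (Ici b)) (a : ℝ) :
    ∀ᶠ x in atTop, ∃! L, a < L ∧ f L = x := by
  set b' := max b (a + 1)
  have hab' : a < b' := by linarith [le_max_right b (a + 1)]
  have hmono' : StrictMonoOn f (Ici b') := hmono.mono (Ici_subset_Ici.mpr (le_max_left _ _))
  obtain ⟨M, hM⟩ := (isCompact_Icc (a := a) (b := b')).bddAbove_image hf.continuousOn
  filter_upwards [eventually_gt_atTop M] with x hx
  have hfb' : f b' < x := lt_of_le_of_lt (hM ⟨b', ⟨hab'.le, le_rfl⟩, rfl⟩) hx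
  obtain ⟨R, hxR, hbR⟩ := ((htop.eventually (eventually_ge_atTop x)).and
    (eventually_ge_atTop b')).exists
  obtain ⟨L, hL, hLx⟩ := intermediate_value_Icc hbR hf.continuousOn ⟨hfb'.le, hxR⟩
  have solution_ge : ∀ L', a < L' → f L' = x → b' ≤ L' := fun L' haL' hL'x => by
    by_contra! hL'b
    exact (hM ⟨L', ⟨haL'.le, hL'b.le⟩, rfl⟩).not_gt (hL'x ▸ hx)
  refine ⟨L, ⟨hab'.trans_le hL.1, hLx⟩, fun L' ⟨haL', hL'x⟩ => ?_⟩
  exact hmono'.injOn (solution_ge L' haL' hL'x) hL.1 (hL'x.trans hLx.symm)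

section ScaledProduct

variable {g : ℝ → ℝ} {c : ℝ}

theorem tendsto_const_mul_mul_self_atTop (hc : 0 < c) (hg : Tendsto g atTop atTop) :
    Tendsto (fun L => c * g L * L) atTop atTop := by
  simpa only [mul_assoc, id] using (hg.atTop_mul_atTop₀ tendsto_id).const_mul_atTop hc

theorem exists_strictMonoOn_Ici_const_mul_mul_self (hc : 0 < c) (hg_mono : Monotone g)
    (hg : Tendsto g atTop atTop) : ∃ b, StrictMonoOn (fun L => c * g L * L) (Ici b) := by
  obtain ⟨b, hgb, hb⟩ := ((hg.eventually (eventually_gt_atTop 0)).and (eventually_ge_atTop 0)).exists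
  refine ⟨b, fun s hs t ht hst => ?_⟩
  simp only [mul_assoc]
  exact mul_lt_mul_of_pos_left
    (mul_lt_mul' (hg_mono hst.le) hst (hb.trans hs) (hgb.trans_le (hg_mono (hs.trans hst.le)))) hc

end ScaledProduct

theorem saddle_point_equation_unique_solution_general
    (N : ℕ)
    (k : ℚ)
    (n₀ : ℕ) (hn₀ : 1 ≤ n₀) :
    ∃ n₁ : ℝ, ∀ x : ℝ, n₁ ≤ x →
      ∃! L : ℝ, 0 < L ∧
        x = 1 / 2 * (Real.pi * n₀ * Real.exp ((L - Real.log N) / 2) - (k : ℝ) / 2 + 1) * L := by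
  set g : ℝ → ℝ := fun L => Real.pi * n₀ * Real.exp ((L - Real.log N) / 2) - (k : ℝ) / 2 + 1
  have hpi_n₀ : 0 < Real.pi * n₀ := mul_pos Real.pi_pos (by exact_mod_cast hn₀)
  have hg_mono : Monotone g := fun s t hst => by
    simp only [g]
    gcongr
  have hg : Tendsto g atTop atTop := by
    refine tendsto_atTop_add_const_right _ _ (tendsto_atTop_add_const_right _ _ ?_)
    refine (Real.tendsto_exp_atTop.comp ?_).const_mul_atTop hpi_n₀
    exact (tendsto_atTop_add_const_right _ _ tendsto_id).atTop_div_const two_pos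
  obtain ⟨b, hmono⟩ := exists_strictMonoOn_Ici_const_mul_mul_self one_half_pos hg_mono hg
  have hf : Continuous fun L => 1 / 2 * g L * L := by fun_prop
  obtain ⟨n₁, hn₁⟩ := eventually_atTop.mp <| hf.eventually_existsUnique_eq_of_strictMonoOn_Ici
    (tendsto_const_mul_mul_self_atTop one_half_pos hg) hmono 0
  exact ⟨n₁, fun x hx => by simpa only [eq_comm] using hn₁ x hx⟩

/-- For all sufficiently large real `x`, the saddle-point equation
`x = (1/2)(π n₀ e^{(L − log N)/2} − k/2 + 1) L` has exactly one positive solution `L`. -/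
theorem saddle_point_equation_unique_solution
    (N : ℕ) (hN : 1 ≤ N)
    (k : ℚ) (hk : 0 < k)
    (n₀ : ℕ) (hn₀ : 1 ≤ n₀) :
    ∃ n₁ : ℝ, ∀ x : ℝ, n₁ ≤ x →
      ∃! L : ℝ, 0 < L ∧
        x = 1 / 2 * (Real.pi * n₀ * Real.exp ((L - Real.log N) / 2) - (k : ℝ) / 2 + 1) * L :=
  saddle_point_equation_unique_solution_general N k n₀ hn₀
end

section
/- For every s ∈ ℂ with Re(s) > k, the integral N^{s/2} ∫_0^∞ (f(t) − α(0)) t^{s−1} dt converges absolutely and equals ((ε−1)s + k)·α(0)/(s(s−k)) + ∫_{1/√N}^∞ (f(t) − α(0))·(ε N^{(k−s)/2} t^{k−s−1} + N^{s/2} t^{s−1}) dt. -/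
open MeasureTheory Set Real

lemma aux_exp_rpow {c ρ : ℝ} (hc : 0 < c) :
    IntegrableOn (fun t : ℝ => Real.exp (-t) * t ^ ρ) (Set.Ioi c) := by
  rcases le_or_gt 0 ρ with h | h
  · have := Real.GammaIntegral_convergent (by linarith : (0:ℝ) < ρ + 1)
    simpa using this.mono_set (Set.Ioi_subset_Ioi hc.le)
  · refine Integrable.mono' (((exp_neg_integrableOn_Ioi c one_pos)).const_mul (c ^ ρ)) ?_ ?_
    · refine (ContinuousOn.aestronglyMeasurable ?_ measurableSet_Ioi)
      exact (Real.continuous_exp.comp continuous_neg).continuousOn.mul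
        (fun t ht => (Real.continuousAt_rpow_const t ρ (Or.inl (hc.trans ht).ne')).continuousWithinAt)
    · filter_upwards [ae_restrict_mem measurableSet_Ioi] with t ht
      have ht0 : 0 < t := hc.trans ht
      rw [Real.norm_eq_abs, abs_of_nonneg (by positivity)]
      have : t ^ ρ ≤ c ^ ρ := by
        exact Real.rpow_le_rpow_of_nonpos hc (le_of_lt ht) h.le
      calc Real.exp (-t) * t ^ ρ ≤ Real.exp (-t) * c ^ ρ := by
            exact mul_le_mul_of_nonneg_left this (Real.exp_pos _).le
        _ = c ^ ρ * Real.exp (-1 * t) := by ring_nf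

lemma aux_sqrt_cpow {N : ℕ} (hN : 1 ≤ N) (w : ℂ) :
    ((1 / Real.sqrt N : ℝ) : ℂ) ^ w = (N : ℂ) ^ (-(w / 2)) := by
  have hN0 : (0:ℝ) < (N:ℝ) := by exact_mod_cast hN
  have h1 : (1 / Real.sqrt N : ℝ) = (N:ℝ) ^ (-(1/2) : ℝ) := by
    rw [Real.rpow_neg hN0.le, ← Real.sqrt_eq_rpow, one_div]
  have h2 : ((1 / Real.sqrt N : ℝ) : ℂ) = (N:ℂ) ^ ((-(1/2) : ℝ) : ℂ) := by
    rw [h1, Complex.ofReal_cpow hN0.le]; norm_cast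
  have hlog : (Complex.log (N:ℂ) * ((-(1/2):ℝ):ℂ)).im = 0 := by
    rw [show ((N:ℂ)) = ((N:ℝ):ℂ) by norm_cast, ← Complex.ofReal_log hN0.le,
      ← Complex.ofReal_mul, Complex.ofReal_im]
  rw [h2, ← Complex.cpow_mul _ (by rw [hlog]; exact neg_lt_zero.mpr Real.pi_pos)
      (by rw [hlog]; exact Real.pi_pos.le)]
  norm_num
  ring_nf

lemma aux_summable {α : ℕ → ℝ} {C A : ℝ} (hbound : ∀ n : ℕ, 1 ≤ n → |α n| ≤ C * (n:ℝ) ^ A)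
    {t : ℝ} (ht : 0 < t) :
    Summable (fun n : ℕ => |α n| * Real.exp (-Real.pi * n * t)) := by
  set m := ⌈A⌉₊ with hm
  set r := Real.exp (-Real.pi * t) with hr
  have hr1 : ‖r‖ < 1 := by
    rw [Real.norm_eq_abs, abs_of_pos (Real.exp_pos _)]
    rw [Real.exp_lt_one_iff]
    have := Real.pi_pos; nlinarith
  have hgeo : Summable (fun n : ℕ => C * ((n:ℝ) ^ m * r ^ n)) :=
    (summable_pow_mul_geometric_of_norm_lt_one m hr1).mul_left C
  refine hgeo.of_norm_bounded_eventually ?_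
  rw [Nat.cofinite_eq_atTop]
  filter_upwards [Filter.eventually_ge_atTop 1] with n hn
  have hn1 : (1:ℝ) ≤ (n:ℝ) := by exact_mod_cast hn
  have hexp : Real.exp (-Real.pi * n * t) = r ^ n := by
    rw [hr, ← Real.exp_nat_mul]; ring_nf
  rw [Real.norm_eq_abs, abs_of_nonneg (by positivity), hexp]
  have h1 : |α n| ≤ C * (n:ℝ) ^ m := by
    refine (hbound n hn).trans (mul_le_mul_of_nonneg_left ?_ ?_)
    · calc (n:ℝ) ^ A ≤ (n:ℝ) ^ (m:ℝ) :=
            Real.rpow_le_rpow_of_exponent_le hn1 (Nat.le_ceil A)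
        _ = (n:ℝ) ^ m := Real.rpow_natCast _ _
    · by_contra h
      push_neg at h
      have := hbound n hn
      nlinarith [abs_nonneg (α n), Real.rpow_pos_of_pos (lt_of_lt_of_le one_pos hn1) A]
  calc |α n| * r ^ n ≤ C * (n:ℝ) ^ m * r ^ n :=
        mul_le_mul_of_nonneg_right h1 (by positivity)
    _ = C * ((n:ℝ) ^ m * r ^ n) := by ring

lemma aux_cont {α : ℕ → ℝ} {C A : ℝ} (hbound : ∀ n : ℕ, 1 ≤ n → |α n| ≤ C * (n:ℝ) ^ A) :
    ContinuousOn (fun t : ℝ => ∑' n : ℕ, α n * Real.exp (-Real.pi * n * t)) (Set.Ioi 0) := by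
  intro t ht
  have ht0 : (0:ℝ) < t := ht
  have h2 : ContinuousOn (fun t : ℝ => ∑' n : ℕ, α n * Real.exp (-Real.pi * n * t))
      (Set.Ici (t/2)) := by
    refine continuousOn_tsum (fun i => ?_) (aux_summable hbound (by linarith : (0:ℝ) < t/2)) ?_
    · exact (continuous_const.mul ((Real.continuous_exp.comp
        ((continuous_const.mul continuous_const).mul continuous_id')))).continuousOn
    · intro n x hx
      rw [Real.norm_eq_abs, abs_mul, abs_of_pos (Real.exp_pos _)]
      refine mul_le_mul_of_nonneg_left ?_ (abs_nonneg _)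
      apply Real.exp_le_exp.2
      have hπ := Real.pi_pos
      have : (0:ℝ) ≤ (n:ℝ) := Nat.cast_nonneg n
      have hx' : t/2 ≤ x := hx
      nlinarith [mul_le_mul_of_nonneg_left hx' (show (0:ℝ) ≤ Real.pi * n by positivity)]
  exact ((h2.continuousAt (Ici_mem_nhds (by linarith))).continuousWithinAt)

set_option maxHeartbeats 800000 in
lemma aux_decay {α : ℕ → ℝ} {C A : ℝ} (hC : 0 < C)
    (hbound : ∀ n : ℕ, 1 ≤ n → |α n| ≤ C * (n:ℝ) ^ A) {c : ℝ} (hc : 0 < c) :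
    ∃ K : ℝ, 0 ≤ K ∧ ∀ t : ℝ, c ≤ t →
      |(∑' n : ℕ, α n * Real.exp (-Real.pi * n * t)) - α 0| ≤ K * Real.exp (-t) := by
  set m := ⌈A⌉₊ with hm
  set r := Real.exp (-(Real.pi * c / 2)) with hr
  have hπ : (2:ℝ) ≤ Real.pi := by have := Real.pi_gt_three; linarith
  have hr1 : ‖r‖ < 1 := by
    rw [Real.norm_eq_abs, abs_of_pos (Real.exp_pos _), Real.exp_lt_one_iff]
    nlinarith
  have hgeoK : Summable (fun n : ℕ => C * (((n:ℝ)+1) ^ m * r ^ (n+1))) := by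
    have h0 := ((summable_pow_mul_geometric_of_norm_lt_one m hr1).mul_left C)
    have h1 : Summable (fun n : ℕ => C * (((n+1 : ℕ):ℝ) ^ m * r ^ (n+1))) :=
      (summable_nat_add_iff 1).2 h0
    refine h1.congr fun n => ?_
    push_cast
    ring
  refine ⟨∑' n : ℕ, C * (((n:ℝ)+1) ^ m * r ^ (n+1)),
    tsum_nonneg (fun n => by positivity), ?_⟩
  intro t htc
  have ht0 : 0 < t := lt_of_lt_of_le hc htc
  have habs : Summable (fun n : ℕ => |α n * Real.exp (-Real.pi * n * t)|) := by
    refine (aux_summable hbound ht0).congr fun n => ?_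
    rw [abs_mul, abs_of_pos (Real.exp_pos _)]
  have hsum := habs.of_abs
  have hzero : (∑' n : ℕ, α n * Real.exp (-Real.pi * n * t)) - α 0
      = ∑' n : ℕ, α (n+1) * Real.exp (-Real.pi * ((n:ℝ)+1) * t) := by
    rw [hsum.tsum_eq_zero_add]
    push_cast
    simp
  rw [hzero]
  have hterm : ∀ n : ℕ, |α (n+1) * Real.exp (-Real.pi * ((n:ℝ)+1) * t)|
      ≤ C * (((n:ℝ)+1) ^ m * r ^ (n+1)) * Real.exp (-t) := by
    intro n
    have hn1 : (1:ℝ) ≤ ((n+1 : ℕ):ℝ) := by push_cast; linarith [show (0:ℝ) ≤ (n:ℝ) from Nat.cast_nonneg n]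
    have hα : |α (n+1)| ≤ C * ((n:ℝ)+1) ^ m := by
      refine (hbound (n+1) (Nat.le_add_left 1 n)).trans ?_
      have hCnn : 0 ≤ C := hC.le
      have : ((n+1:ℕ):ℝ) ^ A ≤ ((n+1:ℕ):ℝ) ^ (m:ℝ) :=
        Real.rpow_le_rpow_of_exponent_le hn1 (Nat.le_ceil A)
      rw [Real.rpow_natCast] at this
      calc C * ((n+1:ℕ):ℝ) ^ A ≤ C * ((n+1:ℕ):ℝ) ^ m := mul_le_mul_of_nonneg_left this hCnn
        _ = C * ((n:ℝ)+1) ^ m := by push_cast; ring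
    have hexp : Real.exp (-Real.pi * ((n:ℝ)+1) * t) ≤ Real.exp (-t) * r ^ (n+1) := by
      have hrn : r ^ (n+1) = Real.exp (-(Real.pi * ((n:ℝ)+1) * c / 2)) := by
        rw [hr, ← Real.exp_nat_mul]
        push_cast
        ring_nf
      rw [hrn, ← Real.exp_add]
      apply Real.exp_le_exp.2
      have h1 : t ≤ Real.pi * ((n:ℝ)+1) * t / 2 := by
        nlinarith [mul_le_mul_of_nonneg_right hπ ht0.le,
          mul_nonneg (mul_nonneg (show (0:ℝ) ≤ Real.pi by linarith)
            (show (0:ℝ) ≤ (n:ℝ) from Nat.cast_nonneg n)) ht0.le]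
      have h2 : Real.pi * ((n:ℝ)+1) * c / 2 ≤ Real.pi * ((n:ℝ)+1) * t / 2 := by
        have : (0:ℝ) ≤ Real.pi * ((n:ℝ)+1) := by positivity
        nlinarith
      nlinarith
    calc |α (n+1) * Real.exp (-Real.pi * ((n:ℝ)+1) * t)|
        = |α (n+1)| * Real.exp (-Real.pi * ((n:ℝ)+1) * t) := by
          rw [abs_mul, abs_of_pos (Real.exp_pos _)]
      _ ≤ (C * ((n:ℝ)+1) ^ m) * (Real.exp (-t) * r ^ (n+1)) := by
          apply mul_le_mul hα hexp (Real.exp_pos _).le (by positivity)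
      _ = C * (((n:ℝ)+1) ^ m * r ^ (n+1)) * Real.exp (-t) := by ring
  have hsum2 : Summable (fun n : ℕ => α (n+1) * Real.exp (-Real.pi * ((n:ℝ)+1) * t)) := by
    have := (summable_nat_add_iff 1).2 hsum
    refine this.congr fun n => ?_
    push_cast
    ring_nf
  calc |∑' n : ℕ, α (n+1) * Real.exp (-Real.pi * ((n:ℝ)+1) * t)|
      ≤ ∑' n : ℕ, |α (n+1) * Real.exp (-Real.pi * ((n:ℝ)+1) * t)| := by
        exact norm_tsum_le_tsum_norm
          (f := fun n : ℕ => α (n+1) * Real.exp (-Real.pi * ((n:ℝ)+1) * t)) hsum2.abs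
    _ ≤ ∑' n : ℕ, C * (((n:ℝ)+1) ^ m * r ^ (n+1)) * Real.exp (-t) := by
        refine Summable.tsum_le_tsum hterm hsum2.abs (hgeoK.mul_right _)
    _ = (∑' n : ℕ, C * (((n:ℝ)+1) ^ m * r ^ (n+1))) * Real.exp (-t) := tsum_mul_right

/-- For `Re(s) > k`, the Mellin integral of `f − α(0)` converges
absolutely and, after splitting at `1/√N` and using the functional equation, equals
the polar term plus an integral over `(1/√N, ∞)`. -/
theorem good_series_integral_representation
    (N : ℕ) (hN : 1 ≤ N)
    (k : ℚ) (hk : 0 < k)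
    (ε : ℝ) (hε : ε = 1 ∨ ε = -1)
    (n₀ : ℕ) (hn₀ : 1 ≤ n₀)
    (α : ℕ → ℝ)
    (hvanish : ∀ n : ℕ, 1 ≤ n → n < n₀ → α n = 0)
    (hgrowth : ∃ C A : ℝ, 0 < C ∧ 0 < A ∧ ∀ n : ℕ, 1 ≤ n → |α n| ≤ C * (n : ℝ) ^ A)
    (f : ℝ → ℝ)
    (hf : ∀ t : ℝ, 0 < t → f t = ∑' n : ℕ, α n * Real.exp (-Real.pi * n * t))
    (hfe : ∀ t : ℝ, 0 < t →
      f (1 / (N * t)) = ε * (N : ℝ) ^ ((k : ℝ) / 2) * t ^ (k : ℝ) * f t) :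
    ∀ s : ℂ, (k : ℝ) < s.re →
      IntegrableOn (fun t : ℝ => ((f t - α 0 : ℝ) : ℂ) * (t : ℂ) ^ (s - 1))
        (Set.Ioi (0 : ℝ)) ∧
      (N : ℂ) ^ (s / 2) * ∫ t in Set.Ioi (0 : ℝ), ((f t - α 0 : ℝ) : ℂ) * (t : ℂ) ^ (s - 1) =
        (((ε : ℂ) - 1) * s + (k : ℂ)) * (α 0 : ℂ) / (s * (s - (k : ℂ))) +
          ∫ t in Set.Ioi (1 / Real.sqrt N), ((f t - α 0 : ℝ) : ℂ) *
            ((ε : ℂ) * (N : ℂ) ^ (((k : ℂ) - s) / 2) * (t : ℂ) ^ ((k : ℂ) - s - 1) +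
              (N : ℂ) ^ (s / 2) * (t : ℂ) ^ (s - 1)) := by
  intro s hs
  obtain ⟨C, A, hC, hA, hbound⟩ := hgrowth
  have hN0 : (0:ℝ) < (N:ℝ) := by exact_mod_cast hN
  have hPne : (N:ℂ) ≠ 0 := by exact_mod_cast hN0.ne'
  have hsqrt : 0 < Real.sqrt N := Real.sqrt_pos.2 hN0
  set c : ℝ := 1 / Real.sqrt N with hcdef
  have hc : 0 < c := by positivity
  have hNc : (N:ℝ) * c = Real.sqrt N := by
    rw [hcdef]
    field_simp
    exact (Real.sq_sqrt hN0.le).symm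
  have hks : (k:ℂ) - s ≠ 0 := by
    intro h
    have : ((k:ℂ) - s).re = 0 := by rw [h]; rfl
    simp only [Complex.sub_re, Complex.ratCast_re] at this
    linarith
  have hsk : s - (k:ℂ) ≠ 0 := by
    intro h; exact hks (by linear_combination -h)
  have hs0 : s ≠ 0 := by
    intro h
    rw [h] at hs
    simp only [Complex.zero_re] at hs
    have : (0:ℝ) < (k:ℝ) := by exact_mod_cast hk
    linarith
  -- continuity of f on Ioi 0
  have hcontf : ContinuousOn f (Set.Ioi (0:ℝ)) :=
    (aux_cont hbound).congr (fun t ht => hf t ht)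
  -- decay bound
  obtain ⟨K, hK0, hKdec⟩ := aux_decay hC hbound hc
  have hKf : ∀ t : ℝ, c ≤ t → |f t - α 0| ≤ K * Real.exp (-t) := by
    intro t ht
    rw [hf t (lt_of_lt_of_le hc ht)]
    exact hKdec t ht
  -- continuity / measurability of integrands
  have hcontG : ∀ w : ℂ, ContinuousOn
      (fun t : ℝ => ((f t - α 0 : ℝ) : ℂ) * (t : ℂ) ^ w) (Set.Ioi (0:ℝ)) := by
    intro w
    apply ContinuousOn.mul
    · exact Complex.continuous_ofReal.comp_continuousOn (hcontf.sub continuousOn_const)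
    · intro t ht
      exact (Complex.continuousAt_ofReal_cpow_const t w (Or.inr (ne_of_gt ht))).continuousWithinAt
  -- integrability on Ioi c
  have Int1 : ∀ w : ℂ, IntegrableOn
      (fun t : ℝ => ((f t - α 0 : ℝ) : ℂ) * (t : ℂ) ^ w) (Set.Ioi c) := by
    intro w
    refine Integrable.mono' ((aux_exp_rpow (ρ := w.re) hc).const_mul K) ?_ ?_
    · exact ((hcontG w).mono (Set.Ioi_subset_Ioi hc.le)).aestronglyMeasurable measurableSet_Ioi
    · filter_upwards [ae_restrict_mem measurableSet_Ioi] with t ht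
      have ht0 : 0 < t := lt_trans hc ht
      rw [norm_mul, Complex.norm_real, Real.norm_eq_abs,
        Complex.norm_cpow_eq_rpow_re_of_pos ht0]
      calc |f t - α 0| * t ^ w.re ≤ (K * Real.exp (-t)) * t ^ w.re := by
            exact mul_le_mul_of_nonneg_right (hKf t (le_of_lt ht)) (by positivity)
        _ = K * (Real.exp (-t) * t ^ w.re) := by ring
  -- change of variables x ↦ (N x)⁻¹
  set φ : ℝ → ℝ := fun x => ((N:ℝ) * x)⁻¹ with hφdef
  set φ' : ℝ → ℝ := fun x => -(N:ℝ) / ((N:ℝ) * x)^2 with hφ'def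
  have hφd : ∀ x ∈ Set.Ioi c, HasDerivWithinAt φ (φ' x) (Set.Ioi c) x := by
    intro x hx
    have hx0 : 0 < x := lt_trans hc hx
    have hne : (N:ℝ) * x ≠ 0 := by positivity
    have h1 : HasDerivAt (fun y : ℝ => (N:ℝ) * y) (N:ℝ) x := by
      simpa using (hasDerivAt_id x).const_mul (N:ℝ)
    exact (h1.inv hne).hasDerivWithinAt
  have hinj : Set.InjOn φ (Set.Ioi c) := by
    intro x hx y hy hxy
    have hx0 : (0:ℝ) < x := lt_trans hc hx
    have hy0 : (0:ℝ) < y := lt_trans hc hy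
    have : (N:ℝ) * x = (N:ℝ) * y := by
      have := inv_injective hxy
      exact this
    exact mul_left_cancel₀ hN0.ne' this
  have hcinv : (Real.sqrt N)⁻¹ = c := by rw [hcdef, one_div]
  have himg : φ '' (Set.Ioi c) = Set.Ioo 0 c := by
    ext y
    simp only [Set.mem_image, Set.mem_Ioi, Set.mem_Ioo]
    constructor
    · rintro ⟨x, hx, rfl⟩
      have hx0 : 0 < x := lt_trans hc hx
      refine ⟨by rw [hφdef]; positivity, ?_⟩
      have h1 : (N:ℝ) * c < (N:ℝ) * x := mul_lt_mul_of_pos_left hx hN0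
      rw [hNc] at h1
      have h2 : ((N:ℝ) * x)⁻¹ < (Real.sqrt N)⁻¹ := by
        apply inv_strictAnti₀ hsqrt h1
      rwa [hcinv] at h2
    · rintro ⟨hy0, hyc⟩
      refine ⟨((N:ℝ) * y)⁻¹, ?_, ?_⟩
      · have h1 : (N:ℝ) * y < Real.sqrt N := by
          calc (N:ℝ) * y < (N:ℝ) * c := mul_lt_mul_of_pos_left hyc hN0
            _ = Real.sqrt N := hNc
        have h2 : (Real.sqrt N)⁻¹ < ((N:ℝ) * y)⁻¹ := inv_strictAnti₀ (by positivity) h1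
        rwa [hcinv] at h2
      · show ((N:ℝ) * ((N:ℝ) * y)⁻¹)⁻¹ = y
        field_simp
  have hsub_int : IntegrableOn (fun t : ℝ => ((f t - α 0 : ℝ) : ℂ) * (t : ℂ) ^ (s-1)) (Set.Ioo 0 c)
      ↔ IntegrableOn (fun x : ℝ =>
          |φ' x| • (((f (φ x) - α 0 : ℝ) : ℂ) * ((φ x : ℝ) : ℂ) ^ (s-1))) (Set.Ioi c) := by
    have := integrableOn_image_iff_integrableOn_abs_deriv_smul measurableSet_Ioi hφd hinj
      (fun t : ℝ => ((f t - α 0 : ℝ) : ℂ) * (t : ℂ) ^ (s-1))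
    rwa [himg] at this
  have hsub_eq : (∫ t in Set.Ioo 0 c, ((f t - α 0 : ℝ) : ℂ) * (t : ℂ) ^ (s-1))
      = ∫ x in Set.Ioi c, |φ' x| • (((f (φ x) - α 0 : ℝ) : ℂ) * ((φ x : ℝ) : ℂ) ^ (s-1)) := by
    have := integral_image_eq_integral_abs_deriv_smul measurableSet_Ioi hφd hinj
      (fun t : ℝ => ((f t - α 0 : ℝ) : ℂ) * (t : ℂ) ^ (s-1))
    rwa [himg] at this
  -- pointwise identity on Ioi c
  have hpt : ∀ x ∈ Set.Ioi c,
      |φ' x| • (((f (φ x) - α 0 : ℝ) : ℂ) * ((φ x : ℝ) : ℂ) ^ (s-1))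
      = (ε : ℂ) * (N:ℂ) ^ ((k:ℂ)/2 - s) * (((f x - α 0 : ℝ) : ℂ) * (x:ℂ) ^ ((k:ℂ) - s - 1))
        + (((α 0 : ℝ):ℂ) * ((ε : ℂ) * (N:ℂ) ^ ((k:ℂ)/2 - s)) * (x:ℂ) ^ ((k:ℂ) - s - 1)
          + (-((α 0 : ℝ):ℂ) * (N:ℂ) ^ (-s)) * (x:ℂ) ^ (-s - 1)) := by
    intro x hx
    have hx0 : 0 < x := lt_trans hc hx
    have hNx : 0 < (N:ℝ) * x := by positivity
    have hXne : (x:ℂ) ≠ 0 := Complex.ofReal_ne_zero.mpr hx0.ne'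
    have hφx : φ x = 1 / ((N:ℝ) * x) := by rw [hφdef]; simp [one_div]
    have hfeq : f (φ x) = ε * (N:ℝ) ^ ((k : ℝ) / 2) * x ^ (k:ℝ) * f x := by
      rw [hφx]; exact hfe x hx0
    have habs : |φ' x| = (N:ℝ) / ((N:ℝ) * x)^2 := by
      rw [hφ'def]
      simp only [neg_div]
      rw [abs_neg, abs_of_pos (by positivity)]
    have hofr : ((f (φ x) - α 0 : ℝ) : ℂ)
        = (ε:ℂ) * (N:ℂ) ^ ((k:ℂ)/2) * (x:ℂ) ^ (k:ℂ) * ((f x :ℝ):ℂ) - ((α 0:ℝ):ℂ) := by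
      rw [hfeq]
      push_cast [Complex.ofReal_cpow hN0.le, Complex.ofReal_cpow hx0.le]
      ring
    have hcpow : ((φ x : ℝ) : ℂ) ^ (s-1) = ((N:ℂ) ^ (s-1) * (x:ℂ) ^ (s-1))⁻¹ := by
      have h1 : ((φ x : ℝ) : ℂ) = ((((N:ℝ) * x : ℝ)):ℂ)⁻¹ := by
        rw [hφx]; push_cast; rw [one_div]
      rw [h1, Complex.inv_cpow _ _ (by
        rw [Complex.arg_ofReal_of_nonneg hNx.le]; exact (Real.pi_ne_zero).symm)]
      rw [Complex.ofReal_mul, Complex.mul_cpow_ofReal_nonneg hN0.le hx0.le]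
      norm_cast
    rw [habs, Complex.real_smul, hofr, hcpow]
    push_cast
    have nz1 : (N:ℂ) ^ s ≠ 0 := by simp [Complex.cpow_eq_zero_iff, hPne]
    have nz2 : (x:ℂ) ^ s ≠ 0 := by simp [Complex.cpow_eq_zero_iff, hXne]
    have nz3 : (N:ℂ) ^ ((k:ℂ)/2) ≠ 0 := by simp [Complex.cpow_eq_zero_iff, hPne]
    have nz4 : (x:ℂ) ^ (k:ℂ) ≠ 0 := by simp [Complex.cpow_eq_zero_iff, hXne]
    rw [Complex.cpow_sub ((k:ℂ)-s) 1 hXne, Complex.cpow_sub (k:ℂ) s hXne, Complex.cpow_one,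
      Complex.cpow_sub ((k:ℂ)/2) s hPne,
      Complex.cpow_sub (-s) 1 hXne, Complex.cpow_one]
    simp only [Complex.cpow_neg]
    rw [Complex.cpow_sub s 1 hPne, Complex.cpow_one,
      Complex.cpow_sub s 1 hXne, Complex.cpow_one]
    field_simp
    ring
  -- cpow integrals
  have IntJ1 : IntegrableOn (fun x : ℝ => (x:ℂ) ^ ((k:ℂ) - s - 1)) (Set.Ioi c) := by
    apply integrableOn_Ioi_cpow_of_lt _ hc
    simp only [Complex.sub_re, Complex.one_re, Complex.ratCast_re]
    linarith
  have IntJ2 : IntegrableOn (fun x : ℝ => (x:ℂ) ^ (-s - 1)) (Set.Ioi c) := by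
    apply integrableOn_Ioi_cpow_of_lt _ hc
    simp only [Complex.sub_re, Complex.one_re, Complex.neg_re]
    have : (0:ℝ) < (k:ℝ) := by exact_mod_cast hk
    linarith
  have J1 : (∫ x in Set.Ioi c, (x:ℂ) ^ ((k:ℂ) - s - 1))
      = -(c:ℂ) ^ ((k:ℂ) - s) / ((k:ℂ) - s) := by
    have := integral_Ioi_cpow_of_lt (a := (k:ℂ) - s - 1)
      (by simp only [Complex.sub_re, Complex.one_re, Complex.ratCast_re]; linarith) hc
    rw [this]
    congr 1 <;> ring_nf
  have J2 : (∫ x in Set.Ioi c, (x:ℂ) ^ (-s - 1)) = -(c:ℂ) ^ (-s) / (-s) := by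
    have h0 : (0:ℝ) < (k:ℝ) := by exact_mod_cast hk
    have := integral_Ioi_cpow_of_lt (a := -s - 1)
      (by simp only [Complex.sub_re, Complex.one_re, Complex.neg_re]; linarith) hc
    rw [this]
    congr 1 <;> ring_nf
  -- integrability over (0, ∞)
  have hIoo_int : IntegrableOn
      (fun t : ℝ => ((f t - α 0 : ℝ) : ℂ) * (t : ℂ) ^ (s-1)) (Set.Ioo 0 c) := by
    rw [hsub_int]
    refine IntegrableOn.congr_fun ?_ (fun x hx => (hpt x hx).symm) measurableSet_Ioi
    exact (((Int1 ((k:ℂ) - s - 1)).const_mul _).add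
      ((IntJ1.const_mul _).add (IntJ2.const_mul _)))
  have hIoc_int : IntegrableOn
      (fun t : ℝ => ((f t - α 0 : ℝ) : ℂ) * (t : ℂ) ^ (s-1)) (Set.Ioc 0 c) := by
    exact hIoo_int.congr_set_ae Ioo_ae_eq_Ioc.symm
  have hIoi0 : IntegrableOn
      (fun t : ℝ => ((f t - α 0 : ℝ) : ℂ) * (t : ℂ) ^ (s-1)) (Set.Ioi 0) := by
    have := hIoc_int.union (Int1 (s-1))
    rwa [Set.Ioc_union_Ioi_eq_Ioi hc.le] at this
  refine ⟨hIoi0, ?_⟩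
  -- split the integral
  have hsplit : (∫ t in Set.Ioi (0:ℝ), ((f t - α 0 : ℝ) : ℂ) * (t : ℂ) ^ (s-1))
      = (∫ t in Set.Ioo 0 c, ((f t - α 0 : ℝ) : ℂ) * (t : ℂ) ^ (s-1))
        + ∫ t in Set.Ioi c, ((f t - α 0 : ℝ) : ℂ) * (t : ℂ) ^ (s-1) := by
    rw [← Set.Ioc_union_Ioi_eq_Ioi hc.le,
      setIntegral_union (Set.Ioc_disjoint_Ioi le_rfl) measurableSet_Ioi hIoc_int (Int1 (s-1)),
      integral_Ioc_eq_integral_Ioo]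
  -- evaluate the (0,c) part
  have hIoo_eq : (∫ t in Set.Ioo 0 c, ((f t - α 0 : ℝ) : ℂ) * (t : ℂ) ^ (s-1))
      = (ε : ℂ) * (N:ℂ) ^ ((k:ℂ)/2 - s)
          * (∫ x in Set.Ioi c, ((f x - α 0 : ℝ) : ℂ) * (x:ℂ) ^ ((k:ℂ) - s - 1))
        + ((((α 0 : ℝ):ℂ) * ((ε : ℂ) * (N:ℂ) ^ ((k:ℂ)/2 - s))) * (-(c:ℂ) ^ ((k:ℂ) - s) / ((k:ℂ) - s))
          + (-((α 0 : ℝ):ℂ) * (N:ℂ) ^ (-s)) * (-(c:ℂ) ^ (-s) / (-s))) := by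
    have h1 := (Int1 ((k:ℂ) - s - 1)).const_mul ((ε:ℂ) * (N:ℂ) ^ ((k:ℂ)/2 - s))
    have h2 := IntJ1.const_mul (((α 0 : ℝ):ℂ) * ((ε : ℂ) * (N:ℂ) ^ ((k:ℂ)/2 - s)))
    have h3 := IntJ2.const_mul (-((α 0 : ℝ):ℂ) * (N:ℂ) ^ (-s))
    have h23 : IntegrableOn (fun x : ℝ =>
        ((α 0 : ℝ):ℂ) * ((ε : ℂ) * (N:ℂ) ^ ((k:ℂ)/2 - s)) * (x:ℂ) ^ ((k:ℂ) - s - 1)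
        + (-((α 0 : ℝ):ℂ) * (N:ℂ) ^ (-s)) * (x:ℂ) ^ (-s - 1)) (Set.Ioi c) := h2.add h3
    rw [hsub_eq, setIntegral_congr_fun measurableSet_Ioi hpt,
      integral_add h1 h23, integral_add h2 h3,
      integral_const_mul, integral_const_mul, integral_const_mul, J1, J2]
  -- evaluate the right-hand integral
  have hRHS : (∫ t in Set.Ioi c, ((f t - α 0 : ℝ) : ℂ) *
        ((ε : ℂ) * (N : ℂ) ^ (((k : ℂ) - s) / 2) * (t : ℂ) ^ ((k : ℂ) - s - 1) +
          (N : ℂ) ^ (s / 2) * (t : ℂ) ^ (s - 1)))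
      = (ε : ℂ) * (N : ℂ) ^ (((k : ℂ) - s) / 2)
          * (∫ x in Set.Ioi c, ((f x - α 0 : ℝ) : ℂ) * (x:ℂ) ^ ((k:ℂ) - s - 1))
        + (N : ℂ) ^ (s / 2)
          * (∫ x in Set.Ioi c, ((f x - α 0 : ℝ) : ℂ) * (x:ℂ) ^ (s - 1)) := by
    have h1 := (Int1 ((k:ℂ) - s - 1)).const_mul ((ε:ℂ) * (N:ℂ) ^ (((k:ℂ) - s)/2))
    have h2 := (Int1 (s - 1)).const_mul ((N:ℂ) ^ (s/2))
    calc (∫ t in Set.Ioi c, ((f t - α 0 : ℝ) : ℂ) *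
          ((ε : ℂ) * (N : ℂ) ^ (((k : ℂ) - s) / 2) * (t : ℂ) ^ ((k : ℂ) - s - 1) +
            (N : ℂ) ^ (s / 2) * (t : ℂ) ^ (s - 1)))
        = ∫ t in Set.Ioi c,
            ((ε:ℂ) * (N:ℂ) ^ (((k:ℂ) - s)/2) * (((f t - α 0 : ℝ) : ℂ) * (t:ℂ) ^ ((k:ℂ) - s - 1))
            + (N:ℂ) ^ (s/2) * (((f t - α 0 : ℝ) : ℂ) * (t:ℂ) ^ (s - 1))) := by
          refine setIntegral_congr_fun measurableSet_Ioi (fun x hx => ?_)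
          ring
      _ = _ := by
          rw [integral_add h1 h2, integral_const_mul, integral_const_mul]
  -- scalar identities
  have e0 : ∀ a b : ℂ, (N:ℂ) ^ a * (N:ℂ) ^ b = (N:ℂ) ^ (a + b) :=
    fun a b => (Complex.cpow_add _ _ hPne).symm
  have hA1 : (N:ℂ) ^ (s/2) * ((ε : ℂ) * (N:ℂ) ^ ((k:ℂ)/2 - s))
      = (ε : ℂ) * (N : ℂ) ^ (((k : ℂ) - s) / 2) := by
    rw [mul_comm ((N:ℂ) ^ (s/2)), mul_assoc, e0]
    congr 2
    ring
  have hA2 : (N:ℂ) ^ (s/2) * ((((α 0 : ℝ):ℂ) * ((ε : ℂ) * (N:ℂ) ^ ((k:ℂ)/2 - s)))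
        * (-(c:ℂ) ^ ((k:ℂ) - s) / ((k:ℂ) - s)))
      = (ε : ℂ) * ((α 0 : ℝ):ℂ) / (s - (k:ℂ)) := by
    have key : (N:ℂ)^(s/2) * (N:ℂ)^((k:ℂ)/2 - s) * (N:ℂ)^(-(((k:ℂ)-s)/2)) = 1 := by
      rw [e0, e0, show s/2 + ((k:ℂ)/2 - s) + -(((k:ℂ)-s)/2) = 0 by ring, Complex.cpow_zero]
    rw [hcdef, aux_sqrt_cpow hN]
    have expand : (N:ℂ) ^ (s/2) * ((((α 0 : ℝ):ℂ) * ((ε : ℂ) * (N:ℂ) ^ ((k:ℂ)/2 - s)))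
          * (-(N:ℂ) ^ (-(((k:ℂ)-s)/2)) / ((k:ℂ) - s)))
        = (((α 0 : ℝ):ℂ) * (ε:ℂ))
            * ((N:ℂ)^(s/2) * (N:ℂ)^((k:ℂ)/2 - s) * (N:ℂ)^(-(((k:ℂ)-s)/2)))
            * (-1 / ((k:ℂ) - s)) := by ring
    rw [expand, key]
    field_simp
    ring
  have hA3 : (N:ℂ) ^ (s/2) * ((-((α 0 : ℝ):ℂ) * (N:ℂ) ^ (-s)) * (-(c:ℂ) ^ (-s) / (-s)))
      = -(((α 0 : ℝ):ℂ) / s) := by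
    have key : (N:ℂ)^(s/2) * (N:ℂ)^(-s) * (N:ℂ)^(-(-s/2)) = 1 := by
      rw [e0, e0, show s/2 + -s + -(-s/2) = 0 by ring, Complex.cpow_zero]
    rw [hcdef, aux_sqrt_cpow hN]
    have expand : (N:ℂ) ^ (s/2) * ((-((α 0 : ℝ):ℂ) * (N:ℂ) ^ (-s))
          * (-(N:ℂ) ^ (-(-s/2)) / (-s)))
        = (-((α 0 : ℝ):ℂ))
            * ((N:ℂ)^(s/2) * (N:ℂ)^(-s) * (N:ℂ)^(-(-s/2)))
            * (-1 / (-s)) := by ring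
    rw [expand, key]
    field_simp
  have hpolar : (ε : ℂ) * ((α 0 : ℝ):ℂ) / (s - (k:ℂ)) + -(((α 0 : ℝ):ℂ) / s)
      = (((ε : ℂ) - 1) * s + (k : ℂ)) * ((α 0 : ℝ) : ℂ) / (s * (s - (k : ℂ))) := by
    field_simp
    ring
  rw [hsplit, hIoo_eq, hRHS]
  linear_combination (∫ x in Set.Ioi c, ((f x - α 0 : ℝ) : ℂ) * (x:ℂ) ^ ((k:ℂ) - s - 1)) * hA1
    + hA2 + hA3 + hpolar
end

section
/- The function G(s) = ((ε−1)s + k)·α(0)/(s(s−k)) + ∫_{1/√N}^∞ (f(t) − α(0))·(ε N^{(k−s)/2} t^{k−s−1} + N^{s/2} t^{s−1}) dt is analytic on ℂ∖{0,k}, and for every n ≥ 0 its n-th derivative at s = k/2 equals 2^{n+1} α(0) n! ((−1)^{n+1} − ε)/k^{n+1} + F(n). -/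
open MeasureTheory
open Real Set Filter Topology

noncomputable def gsL (lN : ℝ) (t : ℝ) : ℝ := lN / 2 + Real.log t

noncomputable def gsPhi (ε kR lN : ℝ) (n : ℕ) (s : ℂ) (t : ℝ) : ℂ :=
  (ε:ℂ) * ((-(gsL lN t) : ℝ):ℂ)^n *
      Complex.exp (((kR/2*lN + (kR-1)*Real.log t : ℝ):ℂ) + s * ((-(gsL lN t) : ℝ):ℂ)) +
    ((gsL lN t : ℝ):ℂ)^n *
      Complex.exp (((-Real.log t : ℝ):ℂ) + s * ((gsL lN t : ℝ):ℂ))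

lemma gsPhi_hasDerivAt (ε kR lN : ℝ) (n : ℕ) (s : ℂ) (t : ℝ) :
    HasDerivAt (fun z => gsPhi ε kR lN n z t) (gsPhi ε kR lN (n+1) s t) s := by
  unfold gsPhi
  have h1 : ∀ (A B : ℂ), HasDerivAt (fun z : ℂ => Complex.exp (A + z * B))
      (B * Complex.exp (A + s * B)) s := by
    intro A B
    have : HasDerivAt (fun z : ℂ => A + z * B) B s := by
      simpa using ((hasDerivAt_id s).mul_const B).const_add A
    simpa [mul_comm] using this.cexp
  have h2 := ((h1 ((kR/2*lN + (kR-1)*Real.log t : ℝ):ℂ) ((-(gsL lN t) : ℝ):ℂ)).const_mul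
    ((ε:ℂ) * ((-(gsL lN t) : ℝ):ℂ)^n)).add
    ((h1 ((-Real.log t : ℝ):ℂ) ((gsL lN t : ℝ):ℂ)).const_mul (((gsL lN t : ℝ):ℂ)^n))
  refine h2.congr_deriv ?_
  push_cast
  ring

lemma gsPhi_zero_eq (N : ℕ) (hN : 1 ≤ N) (ε kR : ℝ) (s : ℂ) (t : ℝ) (ht : 0 < t) :
    gsPhi ε kR (Real.log N) 0 s t =
      (ε:ℂ) * (N:ℂ) ^ (((kR:ℂ) - s)/2) * (t:ℂ) ^ ((kR:ℂ) - s - 1) +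
        (N:ℂ) ^ (s/2) * (t:ℂ) ^ (s - 1) := by
  have hN0 : (N:ℂ) ≠ 0 := by exact_mod_cast Nat.cast_ne_zero.mpr (by omega)
  have ht0 : (t:ℂ) ≠ 0 := by exact_mod_cast ne_of_gt ht
  have hlogN : (Complex.log (N:ℂ)) = ((Real.log N : ℝ) : ℂ) := by
    rw [← Complex.ofReal_natCast, ← Complex.ofReal_log (Nat.cast_nonneg N)]
  have hlogt : (Complex.log (t:ℂ)) = ((Real.log t : ℝ) : ℂ) := by
    rw [← Complex.ofReal_log ht.le]
  rw [Complex.cpow_def_of_ne_zero hN0, Complex.cpow_def_of_ne_zero hN0,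
    Complex.cpow_def_of_ne_zero ht0, Complex.cpow_def_of_ne_zero ht0, hlogN, hlogt]
  unfold gsPhi gsL
  simp only [pow_zero, mul_one, one_mul]
  rw [mul_assoc, ← Complex.exp_add, ← Complex.exp_add]
  congr 2
  · push_cast; ring
  · push_cast; ring

lemma gsPhi_center (ε kR lN : ℝ) (n : ℕ) (t : ℝ) :
    gsPhi ε kR lN n ((kR:ℂ)/2) t =
      (((1 + (-1)^n * ε) * (gsL lN t)^n *
        Real.exp (kR/4*lN + (kR/2-1)*Real.log t) : ℝ) : ℂ) := by
  unfold gsPhi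
  have e1 : ((kR/2*lN + (kR-1)*Real.log t : ℝ):ℂ) + ((kR:ℂ)/2) * ((-(gsL lN t) : ℝ):ℂ)
      = ((kR/4*lN + (kR/2-1)*Real.log t : ℝ) : ℂ) := by unfold gsL; push_cast; ring
  have e2 : ((-Real.log t : ℝ):ℂ) + ((kR:ℂ)/2) * ((gsL lN t : ℝ):ℂ)
      = ((kR/4*lN + (kR/2-1)*Real.log t : ℝ) : ℂ) := by unfold gsL; push_cast; ring
  rw [e1, e2, ← Complex.ofReal_exp]
  push_cast
  ring

lemma gsPhi_norm_le (ε kR lN : ℝ) (hε : |ε| = 1) (n : ℕ) (s : ℂ) (x₀ : ℝ)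
    (hs : |s.re - x₀| ≤ 1) (t : ℝ) :
    ‖gsPhi ε kR lN n s t‖ ≤ |gsL lN t|^n * Real.exp |gsL lN t| *
      (Real.exp (kR/2*lN + (kR-1)*Real.log t - x₀ * gsL lN t) +
        Real.exp (-Real.log t + x₀ * gsL lN t)) := by
  set L := gsL lN t with hLdef
  have key : ∀ (A B : ℝ), |B| = |L| → ‖Complex.exp ((A:ℂ) + s * (B:ℂ))‖ ≤
      Real.exp (A + x₀ * B) * Real.exp |L| := by
    intro A B hB
    rw [Complex.norm_exp, ← Real.exp_add]
    apply Real.exp_le_exp.mpr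
    have hre : ((A:ℂ) + s * (B:ℂ)).re = A + s.re * B := by
      simp [Complex.add_re, Complex.mul_re]
    rw [hre]
    have h1 : |(s.re - x₀) * B| ≤ |L| := by
      rw [abs_mul, hB]
      exact mul_le_of_le_one_left (abs_nonneg _) hs
    have := abs_le.mp h1
    nlinarith [this.1, this.2]
  have h1 := key (kR/2*lN + (kR-1)*Real.log t) (-L) (by rw [abs_neg])
  have h2 := key (-Real.log t) L rfl
  calc ‖gsPhi ε kR lN n s t‖ ≤
      ‖(ε:ℂ) * ((-L : ℝ):ℂ)^n * Complex.exp (((kR/2*lN + (kR-1)*Real.log t : ℝ):ℂ) + s * ((-L : ℝ):ℂ))‖ +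
      ‖((L : ℝ):ℂ)^n * Complex.exp (((-Real.log t : ℝ):ℂ) + s * ((L : ℝ):ℂ))‖ := norm_add_le _ _
    _ ≤ |L|^n * (Real.exp (kR/2*lN + (kR-1)*Real.log t - x₀ * L) * Real.exp |L|) +
        |L|^n * (Real.exp (-Real.log t + x₀ * L) * Real.exp |L|) := by
        have hε' : ‖(ε:ℂ)‖ = 1 := by rw [Complex.norm_real, Real.norm_eq_abs, hε]
        gcongr ?_ + ?_
        · rw [norm_mul, norm_mul, norm_pow, hε', one_mul, Complex.norm_real,
            Real.norm_eq_abs, abs_neg]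
          calc |L|^n * ‖Complex.exp (((kR/2*lN + (kR-1)*Real.log t : ℝ):ℂ) + s * ((-L : ℝ):ℂ))‖
              ≤ |L|^n * (Real.exp ((kR/2*lN + (kR-1)*Real.log t) + x₀ * (-L)) * Real.exp |L|) := by
                gcongr

            _ = |L|^n * (Real.exp (kR/2*lN + (kR-1)*Real.log t - x₀ * L) * Real.exp |L|) := by
                ring_nf
        · rw [norm_mul, norm_pow, Complex.norm_real, Real.norm_eq_abs]
          calc |L|^n * ‖Complex.exp (((-Real.log t : ℝ):ℂ) + s * ((L : ℝ):ℂ))‖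
              ≤ |L|^n * (Real.exp (-Real.log t + x₀ * L) * Real.exp |L|) := by
                gcongr

            _ = _ := rfl
    _ = _ := by ring

lemma gs_abs_log_le {t₀ t : ℝ} (ht₀ : 0 < t₀) (ht : t₀ < t) : |Real.log t| ≤ t + 1/t₀ := by
  have ht' : 0 < t := ht₀.trans ht
  rcases le_or_gt 1 t with h | h
  · rw [abs_of_nonneg (Real.log_nonneg h)]
    have := Real.log_le_sub_one_of_pos ht'
    have : (0:ℝ) < 1/t₀ := by positivity
    linarith [Real.log_le_sub_one_of_pos ht']
  · rw [abs_of_nonpos (Real.log_nonpos ht'.le h.le)]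
    have h2 : -Real.log t = Real.log t⁻¹ := (Real.log_inv t).symm
    have h3 : Real.log t⁻¹ ≤ t⁻¹ - 1 := Real.log_le_sub_one_of_pos (by positivity)
    have h4 : t⁻¹ ≤ t₀⁻¹ := by
      apply inv_anti₀ ht₀ ht.le
    have : (0:ℝ) < t := ht'
    rw [h2]
    rw [one_div]
    linarith

lemma gsBound (ε kR lN : ℝ) (hε : |ε| = 1) (hlN : 0 ≤ lN) (t₀ : ℝ) (ht₀ : 0 < t₀)
    (M : ℝ) (hM : 0 ≤ M) (n : ℕ) (x₀ : ℝ) :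
    ∃ bound : ℝ → ℝ,
      IntegrableOn bound (Ioi t₀) ∧
      ∀ t ∈ Ioi t₀, ∀ s : ℂ, |s.re - x₀| ≤ 1 →
        (M * Real.exp (-(π/2) * t)) * ‖gsPhi ε kR lN n s t‖ ≤ bound t := by
  set β : ℝ := lN/2 + 1/t₀ with hβ
  have hβ0 : 0 ≤ β := by positivity
  set D₁ : ℝ := Real.exp ((kR/2 - x₀/2) * lN) with hD₁
  set D₂ : ℝ := Real.exp (x₀/2 * lN) with hD₂
  set q₁ : ℝ := kR - 1 - x₀ with hq₁
  set q₂ : ℝ := x₀ - 1 with hq₂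
  refine ⟨fun t => M * Real.exp (-(π/2) * t) *
      ((β + t)^n * Real.exp (β + t) * (D₁ * t ^ q₁ + D₂ * t ^ q₂)), ?_, ?_⟩
  · -- integrability
    set b : ℝ := (π/2 - 1)/2 with hb
    have hbpos : 0 < b := by
      have := Real.pi_gt_three
      rw [hb]; linarith
    have hcont : ContinuousOn (fun t : ℝ => M * Real.exp (-(π/2) * t) *
        ((β + t)^n * Real.exp (β + t) * (D₁ * t ^ q₁ + D₂ * t ^ q₂))) (Ici t₀) := by
      have hrp : ∀ q : ℝ, ContinuousOn (fun t : ℝ => t ^ q) (Ici t₀) := fun q t ht =>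
        (Real.continuousAt_rpow_const t q (Or.inl (ne_of_gt (lt_of_lt_of_le ht₀ ht)))).continuousWithinAt
      fun_prop (disch := first | exact hrp _ | positivity)
    apply integrable_of_isBigO_exp_neg hbpos hcont
    rw [Asymptotics.isBigO_iff]
    refine ⟨1, ?_⟩
    have hU : Tendsto (fun t : ℝ => (M * Real.exp β * (β+1)^n) *
        (D₁ * (t ^ ((n:ℝ)+q₁) * Real.exp (-b*t)) + D₂ * (t ^ ((n:ℝ)+q₂) * Real.exp (-b*t))))
        atTop (𝓝 0) := by
      have t1 := tendsto_rpow_mul_exp_neg_mul_atTop_nhds_zero ((n:ℝ)+q₁) b hbpos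
      have t2 := tendsto_rpow_mul_exp_neg_mul_atTop_nhds_zero ((n:ℝ)+q₂) b hbpos
      simpa using ((t1.const_mul D₁).add (t2.const_mul D₂)).const_mul (M * Real.exp β * (β+1)^n)
    have hle : ∀ᶠ t in atTop, (M * Real.exp (-(π/2) * t) *
        ((β + t)^n * Real.exp (β + t) * (D₁ * t ^ q₁ + D₂ * t ^ q₂))) * Real.exp (b*t) ≤
        (M * Real.exp β * (β+1)^n) *
        (D₁ * (t ^ ((n:ℝ)+q₁) * Real.exp (-b*t)) + D₂ * (t ^ ((n:ℝ)+q₂) * Real.exp (-b*t))) := by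
      filter_upwards [eventually_ge_atTop (1:ℝ)] with t ht
      have ht0 : (0:ℝ) < t := lt_of_lt_of_le one_pos ht
      have hexp : Real.exp (-(π/2)*t) * Real.exp (β+t) * Real.exp (b*t)
          = Real.exp β * Real.exp (-b*t) := by
        rw [← Real.exp_add, ← Real.exp_add, ← Real.exp_add]
        congr 1
        rw [hb]; ring
      have hpow : (β + t)^n ≤ (β+1)^n * t^(n:ℝ) := by
        rw [Real.rpow_natCast, ← mul_pow]
        apply pow_le_pow_left₀ (by positivity)
        nlinarith
      have hmerge : ∀ q : ℝ, t^(n:ℝ) * t^q = t^((n:ℝ)+q) := fun q =>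
        (Real.rpow_add ht0 _ _).symm
      calc M * Real.exp (-(π/2) * t) *
            ((β + t)^n * Real.exp (β + t) * (D₁ * t ^ q₁ + D₂ * t ^ q₂)) * Real.exp (b*t)
          = M * (β+t)^n * (D₁ * t ^ q₁ + D₂ * t ^ q₂) *
            (Real.exp (-(π/2)*t) * Real.exp (β+t) * Real.exp (b*t)) := by ring
        _ = M * (β+t)^n * (D₁ * t ^ q₁ + D₂ * t ^ q₂) * (Real.exp β * Real.exp (-b*t)) := by
            rw [hexp]
        _ ≤ M * ((β+1)^n * t^(n:ℝ)) * (D₁ * t ^ q₁ + D₂ * t ^ q₂) * (Real.exp β * Real.exp (-b*t)) := by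
            gcongr
        _ = (M * Real.exp β * (β+1)^n) *
            (D₁ * (t^(n:ℝ) * t ^ q₁ * Real.exp (-b*t)) + D₂ * (t^(n:ℝ) * t ^ q₂ * Real.exp (-b*t))) := by
            ring
        _ = _ := by rw [hmerge q₁, hmerge q₂]
    have h01 := (hU.eventually (eventually_le_nhds one_pos : ∀ᶠ x in 𝓝 (0:ℝ), x ≤ 1)).and hle
    filter_upwards [h01, eventually_ge_atTop (max t₀ 1)] with t ⟨h1t, h2t⟩ htt
    have ht0 : (0:ℝ) < t := lt_of_lt_of_le one_pos ((le_max_right _ _).trans htt)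
    have ht₀' : t₀ ≤ t := (le_max_left _ _).trans htt
    have hnn : 0 ≤ M * Real.exp (-(π/2) * t) *
        ((β + t)^n * Real.exp (β + t) * (D₁ * t ^ q₁ + D₂ * t ^ q₂)) := by
      have h1 : (0:ℝ) ≤ t ^ q₁ := Real.rpow_nonneg ht0.le _
      have h2 : (0:ℝ) ≤ t ^ q₂ := Real.rpow_nonneg ht0.le _
      have h3 : (0:ℝ) ≤ β + t := by positivity
      positivity
    rw [Real.norm_eq_abs, Real.norm_eq_abs, abs_of_nonneg hnn,
      abs_of_nonneg (Real.exp_nonneg _), one_mul]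
    have hkey := h2t.trans h1t
    have hmul : Real.exp (b*t) * Real.exp (-b*t) = 1 := by
      rw [← Real.exp_add]; ring_nf; exact Real.exp_zero
    nlinarith [hkey, hmul, Real.exp_pos (-b*t), hnn]
  · intro t ht s hs
    have ht' : 0 < t := ht₀.trans ht
    have hnorm := gsPhi_norm_le ε kR lN hε n s x₀ hs t
    have hE1 : Real.exp (kR/2*lN + (kR-1)*Real.log t - x₀ * gsL lN t) = D₁ * t ^ q₁ := by
      rw [hD₁, Real.rpow_def_of_pos ht', ← Real.exp_add]
      congr 1
      unfold gsL; rw [hq₁]; ring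
    have hE2 : Real.exp (-Real.log t + x₀ * gsL lN t) = D₂ * t ^ q₂ := by
      rw [hD₂, Real.rpow_def_of_pos ht', ← Real.exp_add]
      congr 1
      unfold gsL; rw [hq₂]; ring
    have hLle : |gsL lN t| ≤ β + t := by
      unfold gsL
      calc |lN/2 + Real.log t| ≤ |lN/2| + |Real.log t| := abs_add_le _ _
        _ ≤ lN/2 + (t + 1/t₀) := by
            rw [abs_of_nonneg (by positivity)]
            exact add_le_add le_rfl (gs_abs_log_le ht₀ ht)
        _ = β + t := by rw [hβ]; ring
    rw [hE1, hE2] at hnorm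
    have hq1 : (0:ℝ) ≤ t ^ q₁ := Real.rpow_nonneg ht'.le _
    have hq2 : (0:ℝ) ≤ t ^ q₂ := Real.rpow_nonneg ht'.le _
    calc M * Real.exp (-(π/2)*t) * ‖gsPhi ε kR lN n s t‖ ≤
        M * Real.exp (-(π/2)*t) * (|gsL lN t|^n * Real.exp |gsL lN t| * (D₁*t^q₁ + D₂*t^q₂)) := by
          gcongr
      _ ≤ M * Real.exp (-(π/2)*t) * ((β + t)^n * Real.exp (β + t) * (D₁*t^q₁ + D₂*t^q₂)) := by
          gcongr

lemma gsPhi_continuousOn (ε kR lN : ℝ) (n : ℕ) (s : ℂ) (t₀ : ℝ) (ht₀ : 0 < t₀) :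
    ContinuousOn (fun t => gsPhi ε kR lN n s t) (Ici t₀) := by
  have hlog : ContinuousOn Real.log (Ici t₀) :=
    Real.continuousOn_log.mono (fun x hx => ne_of_gt (lt_of_lt_of_le ht₀ hx))
  unfold gsPhi gsL
  fun_prop (disch := exact hlog)

lemma gs_decay (α : ℕ → ℝ) (C A : ℝ) (hC : 0 < C) (hA : 0 < A)
    (hα : ∀ n : ℕ, 1 ≤ n → |α n| ≤ C * (n:ℝ) ^ A) (t₀ : ℝ) (ht₀ : 0 < t₀) :
    ∃ M : ℝ, 0 ≤ M ∧ ∀ t, t₀ ≤ t →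
      Summable (fun n : ℕ => α n * Real.exp (-π * n * t)) ∧
      |(∑' n : ℕ, α n * Real.exp (-π * n * t)) - α 0| ≤ M * Real.exp (-(π/2) * t) := by
  set r₀ : ℝ := Real.exp (-(π * t₀ / 2)) with hr₀
  have hr₀pos : 0 < r₀ := Real.exp_pos _
  have hr₀lt : r₀ < 1 := by
    rw [hr₀, Real.exp_lt_one_iff]
    have := Real.pi_pos
    nlinarith
  set K : ℕ := ⌈A⌉₊ with hK
  have hK1 : 1 ≤ K := Nat.one_le_ceil_iff.mpr hA
  set u : ℕ → ℝ := fun n => C * (n:ℝ)^K * r₀^n with hu_def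
  have hu : Summable u := by
    have := summable_pow_mul_geometric_of_norm_lt_one K
      (r := r₀) (by rw [Real.norm_eq_abs, abs_of_pos hr₀pos]; exact hr₀lt)
    simpa [hu_def, mul_assoc] using this.mul_left C
  have hu0 : u 0 = 0 := by
    simp [hu_def, zero_pow (by omega : K ≠ 0)]
  have hunn : ∀ n, 0 ≤ u n := fun n => by
    have : (0:ℝ) ≤ (n:ℝ)^K := by positivity
    have : (0:ℝ) ≤ r₀^n := by positivity
    simp only [hu_def]; positivity
  refine ⟨∑' n, u n, tsum_nonneg hunn, fun t ht => ?_⟩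
  have htpos : 0 < t := ht₀.trans_le ht
  have hπ := Real.pi_pos
  -- key termwise bound for n ≥ 1
  have key : ∀ n : ℕ, 1 ≤ n →
      |α n * Real.exp (-π * n * t)| ≤ u n * Real.exp (-(π/2) * t) := by
    intro n hn
    have hn1 : (1:ℝ) ≤ (n:ℝ) := by exact_mod_cast hn
    have h1 : |α n| ≤ C * (n:ℝ)^K := by
      refine (hα n hn).trans ?_
      have : (n:ℝ)^A ≤ (n:ℝ)^(K:ℝ) := Real.rpow_le_rpow_of_exponent_le hn1 (Nat.le_ceil A)
      rw [Real.rpow_natCast] at this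
      nlinarith
    have h2 : Real.exp (-π * n * t) ≤ r₀^n * Real.exp (-(π/2) * t) := by
      have : r₀^n = Real.exp (n * (-(π * t₀ / 2))) := by
        rw [← Real.exp_nat_mul]
      rw [this, ← Real.exp_add, Real.exp_le_exp]
      nlinarith [mul_nonneg (mul_nonneg hπ.le (sub_nonneg.mpr hn1)) htpos.le,
        mul_nonneg (mul_nonneg hπ.le (Nat.cast_nonneg n : (0:ℝ) ≤ n)) (sub_nonneg.mpr ht)]
    rw [abs_mul, abs_of_pos (Real.exp_pos _)]
    calc |α n| * Real.exp (-π * n * t) ≤ (C * (n:ℝ)^K) * (r₀^n * Real.exp (-(π/2) * t)) := by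
          apply mul_le_mul h1 h2 (Real.exp_pos _).le (by positivity)
      _ = u n * Real.exp (-(π/2) * t) := by rw [hu_def]; ring
  have hvsum : Summable (fun n : ℕ => u (n+1) * Real.exp (-(π/2) * t)) :=
    ((summable_nat_add_iff 1).mpr hu).mul_right _
  have hsum1 : Summable (fun n : ℕ => α (n+1) * Real.exp (-π * (n+1 : ℕ) * t)) := by
    apply Summable.of_norm
    apply Summable.of_nonneg_of_le (fun n => norm_nonneg _) (fun n => key (n+1) (by omega)) hvsum
  have hsum : Summable (fun n : ℕ => α n * Real.exp (-π * n * t)) := by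
    rw [← summable_nat_add_iff 1]
    exact_mod_cast hsum1
  refine ⟨hsum, ?_⟩
  have hsplit : (∑' n : ℕ, α n * Real.exp (-π * n * t)) =
      α 0 + ∑' n : ℕ, α (n+1) * Real.exp (-π * (n+1 : ℕ) * t) := by
    rw [hsum.tsum_eq_zero_add]
    simp
  rw [hsplit]
  rw [add_sub_cancel_left]
  calc |∑' n : ℕ, α (n+1) * Real.exp (-π * (n+1 : ℕ) * t)|
      ≤ ∑' n : ℕ, |α (n+1) * Real.exp (-π * (n+1 : ℕ) * t)| := by
        exact_mod_cast norm_tsum_le_tsum_norm hsum1.norm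
    _ ≤ ∑' n : ℕ, u (n+1) * Real.exp (-(π/2) * t) := by
        apply Summable.tsum_le_tsum (fun n => key (n+1) (by omega)) hsum1.abs hvsum
    _ = (∑' n : ℕ, u (n+1)) * Real.exp (-(π/2) * t) := tsum_mul_right
    _ = (∑' n : ℕ, u n) * Real.exp (-(π/2) * t) := by
        rw [hu.tsum_eq_zero_add, hu0, zero_add]

lemma gs_cont (α : ℕ → ℝ) (C A : ℝ) (hC : 0 < C) (hA : 0 < A)
    (hα : ∀ n : ℕ, 1 ≤ n → |α n| ≤ C * (n:ℝ) ^ A) (t₀ : ℝ) (ht₀ : 0 < t₀) :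
    Continuous (fun t : ℝ => ∑' n : ℕ, α n * Real.exp (-π * n * max t t₀)) := by
  set ρ : ℝ := Real.exp (-(π * t₀)) with hρ
  have hρpos : 0 < ρ := Real.exp_pos _
  have hρlt : ρ < 1 := by
    rw [hρ, Real.exp_lt_one_iff]
    have := Real.pi_pos
    nlinarith
  set K : ℕ := ⌈A⌉₊ with hK
  have hK1 : 1 ≤ K := Nat.one_le_ceil_iff.mpr hA
  have hu : Summable (fun n : ℕ => |α n| * ρ^n) := by
    have h2 : Summable (fun n : ℕ => C * (n:ℝ)^K * ρ^n) := by
      have := summable_pow_mul_geometric_of_norm_lt_one K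
        (r := ρ) (by rw [Real.norm_eq_abs, abs_of_pos hρpos]; exact hρlt)
      simpa [mul_assoc] using this.mul_left C
    rw [← summable_nat_add_iff 1]
    apply Summable.of_nonneg_of_le (fun n => by positivity)
      (fun n => ?_) ((summable_nat_add_iff 1).mpr h2)
    have hn1 : (1:ℝ) ≤ ((n+1 : ℕ):ℝ) := by exact_mod_cast Nat.one_le_iff_ne_zero.mpr (by omega)
    have h1 : |α (n+1)| ≤ C * ((n+1:ℕ):ℝ)^K := by
      refine (hα (n+1) (by omega)).trans ?_
      have : ((n+1:ℕ):ℝ)^A ≤ ((n+1:ℕ):ℝ)^(K:ℝ) := Real.rpow_le_rpow_of_exponent_le hn1 (Nat.le_ceil A)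
      rw [Real.rpow_natCast] at this
      nlinarith
    have : (0:ℝ) ≤ ρ ^ (n+1) := by positivity
    nlinarith
  apply continuous_tsum (u := fun n => |α n| * ρ^n) (fun n => by fun_prop) hu
  intro n t
  rw [Real.norm_eq_abs, abs_mul, abs_of_pos (Real.exp_pos _)]
  have h1 : Real.exp (-π * n * max t t₀) ≤ ρ^n := by
    have : ρ^n = Real.exp (n * (-(π * t₀))) := by rw [← Real.exp_nat_mul]
    rw [this, Real.exp_le_exp]
    have h2 : t₀ ≤ max t t₀ := le_max_right _ _
    have h3 : (0:ℝ) ≤ (n:ℝ) := Nat.cast_nonneg n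
    nlinarith [mul_nonneg (mul_nonneg Real.pi_pos.le h3) (sub_nonneg.mpr h2)]
  nlinarith [abs_nonneg (α n), Real.exp_pos (-π * n * max t t₀)]

lemma gsH (ε kR lN : ℝ) (hε : |ε| = 1) (hlN : 0 ≤ lN) (t₀ : ℝ) (ht₀ : 0 < t₀)
    (g : ℝ → ℝ) (M : ℝ) (hM : 0 ≤ M)
    (hgle : ∀ t ∈ Ioi t₀, |g t| ≤ M * Real.exp (-(π/2) * t))
    (hgm : AEStronglyMeasurable g (volume.restrict (Ioi t₀)))
    (n : ℕ) (s₀ : ℂ) :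
    Integrable (fun t => (g t : ℂ) * gsPhi ε kR lN n s₀ t) (volume.restrict (Ioi t₀)) ∧
    HasDerivAt (fun s => ∫ t in Ioi t₀, (g t : ℂ) * gsPhi ε kR lN n s t)
      (∫ t in Ioi t₀, (g t : ℂ) * gsPhi ε kR lN (n+1) s₀ t) s₀ := by
  have meas : ∀ (m : ℕ) (s : ℂ),
      AEStronglyMeasurable (fun t => (g t : ℂ) * gsPhi ε kR lN m s t)
        (volume.restrict (Ioi t₀)) := by
    intro m s
    apply AEStronglyMeasurable.mul
    · exact Complex.continuous_ofReal.comp_aestronglyMeasurable hgm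
    · exact ((gsPhi_continuousOn ε kR lN m s t₀ ht₀).mono Ioi_subset_Ici_self).aestronglyMeasurable
        measurableSet_Ioi
  have hdom : ∀ (m : ℕ), ∀ t ∈ Ioi t₀, ∀ s : ℂ, |s.re - s₀.re| ≤ 1 →
      ‖(g t : ℂ) * gsPhi ε kR lN m s t‖ ≤
        (M * Real.exp (-(π/2) * t)) * ‖gsPhi ε kR lN m s t‖ := by
    intro m t ht s hs
    rw [norm_mul, Complex.norm_real, Real.norm_eq_abs]
    exact mul_le_mul_of_nonneg_right (hgle t ht) (norm_nonneg _)
  have hint : ∀ (m : ℕ), Integrable (fun t => (g t : ℂ) * gsPhi ε kR lN m s₀ t)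
      (volume.restrict (Ioi t₀)) := by
    intro m
    obtain ⟨bound, hbi, hble⟩ := gsBound ε kR lN hε hlN t₀ ht₀ M hM m s₀.re
    apply Integrable.mono' hbi (meas m s₀)
    rw [ae_restrict_iff' measurableSet_Ioi]
    filter_upwards with t ht
    exact (hdom m t ht s₀ (by simp)).trans (hble t ht s₀ (by simp))
  refine ⟨hint n, ?_⟩
  obtain ⟨bound, hbi, hble⟩ := gsBound ε kR lN hε hlN t₀ ht₀ M hM (n+1) s₀.re
  have key := hasDerivAt_integral_of_dominated_loc_of_deriv_le
    (F := fun s t => (g t : ℂ) * gsPhi ε kR lN n s t)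
    (F' := fun s t => (g t : ℂ) * gsPhi ε kR lN (n+1) s t)
    (μ := volume.restrict (Ioi t₀)) (x₀ := s₀) (bound := bound)
    (Metric.ball_mem_nhds s₀ one_pos) (Filter.Eventually.of_forall (fun s => meas n s)) (hint n) (meas (n+1) s₀)
    ?_ hbi ?_
  · exact key.2
  · rw [ae_restrict_iff' measurableSet_Ioi]
    filter_upwards with t ht s hs
    have hre : |s.re - s₀.re| ≤ 1 := by
      have h1 : |(s - s₀).re| ≤ ‖s - s₀‖ := Complex.abs_re_le_norm _
      have h2 : ‖s - s₀‖ < 1 := by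
        rw [← dist_eq_norm]
        exact Metric.mem_ball.mp hs
      simp only [Complex.sub_re] at h1
      linarith
    exact (hdom (n+1) t ht s hre).trans (hble t ht s hre)
  · filter_upwards with t s hs
    exact (gsPhi_hasDerivAt ε kR lN n s t).const_mul _

/-- The completed function `G` (polar term plus incomplete Mellin
integral) is analytic away from `{0, k}` and its `n`-th derivative at the central
point `s = k/2` equals the polar contribution plus `F(n)`. -/
theorem good_series_central_derivatives
    (N : ℕ) (hN : 1 ≤ N)
    (k : ℚ) (hk : 0 < k)
    (ε : ℝ) (hε : ε = 1 ∨ ε = -1)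
    (n₀ : ℕ) (hn₀ : 1 ≤ n₀)
    (α : ℕ → ℝ)
    (hvanish : ∀ n : ℕ, 1 ≤ n → n < n₀ → α n = 0)
    (hgrowth : ∃ C A : ℝ, 0 < C ∧ 0 < A ∧ ∀ n : ℕ, 1 ≤ n → |α n| ≤ C * (n : ℝ) ^ A)
    (f : ℝ → ℝ)
    (hf : ∀ t : ℝ, 0 < t → f t = ∑' n : ℕ, α n * Real.exp (-Real.pi * n * t))
    (hfe : ∀ t : ℝ, 0 < t →
      f (1 / (N * t)) = ε * (N : ℝ) ^ ((k : ℝ) / 2) * t ^ (k : ℝ) * f t)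
    (F : ℕ → ℝ)
    (hF : ∀ m : ℕ, F m = (N : ℝ) ^ ((k : ℝ) / 4) * (1 + (-1) ^ m * ε) / 2 ^ m *
      ∫ t in Set.Ioi (1 / Real.sqrt N),
        (f t - α 0) * t ^ ((k : ℝ) / 2 - 1) * (Real.log N + 2 * Real.log t) ^ m)
    (G : ℂ → ℂ)
    (hG : ∀ s : ℂ, G s =
      (((ε : ℂ) - 1) * s + (k : ℂ)) * (α 0 : ℂ) / (s * (s - (k : ℂ))) +
        ∫ t in Set.Ioi (1 / Real.sqrt N), ((f t - α 0 : ℝ) : ℂ) *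
          ((ε : ℂ) * (N : ℂ) ^ (((k : ℂ) - s) / 2) * (t : ℂ) ^ ((k : ℂ) - s - 1) +
            (N : ℂ) ^ (s / 2) * (t : ℂ) ^ (s - 1))) :
    AnalyticOnNhd ℂ G ({0, (k : ℂ)}ᶜ) ∧
    ∀ n : ℕ, iteratedDeriv n G ((k : ℂ) / 2) =
      2 ^ (n + 1) * (α 0 : ℂ) * (n.factorial : ℂ) * ((-1) ^ (n + 1) - (ε : ℂ)) /
        (k : ℂ) ^ (n + 1) + (F n : ℂ) := by
  obtain ⟨C, A, hC, hA, hα⟩ := hgrowth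
  set kR : ℝ := (k : ℝ) with hkR
  have hkRpos : 0 < kR := by rw [hkR]; exact_mod_cast hk
  set t₀ : ℝ := 1 / Real.sqrt N with ht₀def
  have hNpos : (0:ℝ) < N := by exact_mod_cast hN
  have ht₀ : 0 < t₀ := by
    rw [ht₀def]
    positivity
  set lN : ℝ := Real.log N with hlNdef
  have hlN : 0 ≤ lN := Real.log_nonneg (by exact_mod_cast hN)
  have hε' : |ε| = 1 := by rcases hε with h | h <;> rw [h] <;> norm_num
  obtain ⟨M, hM, hdec⟩ := gs_decay α C A hC hA hα t₀ ht₀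
  set g : ℝ → ℝ := fun t => f t - α 0 with hgdef
  have hgle : ∀ t ∈ Ioi t₀, |g t| ≤ M * Real.exp (-(π/2) * t) := by
    intro t ht
    have htpos : 0 < t := ht₀.trans ht
    rw [hgdef]
    simp only
    rw [hf t htpos]
    exact (hdec t (le_of_lt ht)).2
  have hgm : AEStronglyMeasurable g (volume.restrict (Ioi t₀)) := by
    have hcont : Continuous (fun t : ℝ => (∑' n : ℕ, α n * Real.exp (-π * n * max t t₀)) - α 0) :=
      (gs_cont α C A hC hA hα t₀ ht₀).sub continuous_const
    apply hcont.aestronglyMeasurable.congr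
    rw [Filter.EventuallyEq, ae_restrict_iff' measurableSet_Ioi]
    filter_upwards with t ht
    rw [hgdef]
    simp only
    rw [hf t (ht₀.trans ht), max_eq_left (le_of_lt ht)]
  set Hn : ℕ → ℂ → ℂ := fun n s => ∫ t in Ioi t₀, (g t : ℂ) * gsPhi ε kR lN n s t with hHn
  have hH := fun (n : ℕ) (s₀ : ℂ) => gsH ε kR lN hε' hlN t₀ ht₀ g M hM hgle hgm n s₀
  have hkC : ((kR:ℝ):ℂ) = ((k:ℚ):ℂ) := by push_cast; rfl
  have hGeq : ∀ s : ℂ, G s =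
      (((ε : ℂ) - 1) * s + (k : ℂ)) * (α 0 : ℂ) / (s * (s - (k : ℂ))) + Hn 0 s := by
    intro s
    rw [hG s, hHn]
    congr 1
    apply setIntegral_congr_fun measurableSet_Ioi
    intro t ht
    simp only
    rw [gsPhi_zero_eq N hN ε kR s t (ht₀.trans ht), hkC, hgdef]
  set U : Set ℂ := {0, (k:ℂ)}ᶜ with hUdef
  have hUopen : IsOpen U := by
    rw [hUdef]
    exact (Set.Finite.isClosed (Set.toFinite _)).isOpen_compl
  have hmem : ∀ s : ℂ, s ∈ U ↔ s ≠ 0 ∧ s ≠ (k:ℂ) := by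
    intro s
    simp [hUdef, Set.mem_compl_iff, Set.mem_insert_iff, not_or]
  set Φ : ℕ → ℂ → ℂ := fun n s =>
      (α 0 : ℂ) * (ε : ℂ) * (-1)^n * (n.factorial : ℂ) * (s - (k:ℂ))^(-(n:ℤ)-1)
      - (α 0 : ℂ) * (-1)^n * (n.factorial : ℂ) * s^(-(n:ℤ)-1) + Hn n s with hΦ
  have hbase : ∀ s ∈ U, G s = Φ 0 s := by
    intro s hs
    obtain ⟨hs0, hsk⟩ := (hmem s).mp hs
    rw [hGeq s, hΦ]
    simp only [pow_zero, Nat.factorial_zero, Nat.cast_one, Nat.cast_zero, neg_zero,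
      zero_sub, mul_one, one_mul, zpow_neg, zpow_one]
    have hsk' : s - (k:ℂ) ≠ 0 := sub_ne_zero.mpr hsk
    field_simp
    ring
  have hΦd : ∀ (n : ℕ), ∀ s ∈ U, HasDerivAt (Φ n) (Φ (n+1) s) s := by
    intro n s hs
    obtain ⟨hs0, hsk⟩ := (hmem s).mp hs
    have hsk' : s - (k:ℂ) ≠ 0 := sub_ne_zero.mpr hsk
    have h1 : HasDerivAt (fun z : ℂ => (z - (k:ℂ))^(-(n:ℤ)-1))
        (((-(n:ℤ)-1 : ℤ):ℂ) * (s-(k:ℂ))^(-(n:ℤ)-1-1)) s := by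
      have := (hasDerivAt_zpow (-(n:ℤ)-1) (s-(k:ℂ)) (Or.inl hsk')).comp s
        ((hasDerivAt_id s).sub_const (k:ℂ))
      simp only [mul_one] at this
      exact this
    have h2 : HasDerivAt (fun z : ℂ => z^(-(n:ℤ)-1)) (((-(n:ℤ)-1 : ℤ):ℂ) * s^(-(n:ℤ)-1-1)) s :=
      hasDerivAt_zpow (-(n:ℤ)-1) s (Or.inl hs0)
    have h3 := (hH n s).2
    have hd := ((h1.const_mul ((α 0 : ℂ) * (ε : ℂ) * (-1)^n * (n.factorial : ℂ))).sub
      (h2.const_mul ((α 0 : ℂ) * (-1)^n * (n.factorial : ℂ)))).add h3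
    refine hd.congr_deriv ?_
    rw [hΦ]
    simp only
    have he : (-(n:ℤ)-1-1) = -(((n+1:ℕ)):ℤ)-1 := by push_cast; ring
    rw [← he]
    push_cast [Nat.factorial_succ]
    ring
  have hkCne : ((k:ℚ):ℂ) ≠ 0 := by
    simp only [ne_eq, Rat.cast_eq_zero]
    exact hk.ne'
  have hhalfmem : ((k:ℚ):ℂ)/2 ∈ U := by
    rw [hmem]
    constructor
    · simp [hkCne]
    · intro h
      apply hkCne
      linear_combination (-2 : ℂ) * h
  constructor
  · -- analyticity
    apply DifferentiableOn.analyticOnNhd ?_ hUopen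
    intro s hs
    have hev : Φ 0 =ᶠ[𝓝 s] G := by
      filter_upwards [hUopen.mem_nhds hs] with z hz
      exact (hbase z hz).symm
    exact ((hΦd 0 s hs).congr_of_eventuallyEq hev.symm).differentiableAt.differentiableWithinAt
  · intro n
    have hiter : ∀ (m : ℕ), ∀ s ∈ U, iteratedDeriv m G s = Φ m s := by
      intro m
      induction m with
      | zero => intro s hs; rw [iteratedDeriv_zero]; exact hbase s hs
      | succ m ih =>
        intro s hs
        rw [iteratedDeriv_succ]
        have hev : iteratedDeriv m G =ᶠ[𝓝 s] Φ m := by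
          filter_upwards [hUopen.mem_nhds hs] with z hz
          exact ih z hz
        rw [hev.deriv_eq]
        exact (hΦd m s hs).deriv
    rw [hiter n _ hhalfmem]
    have hcenter : Hn n (((k:ℚ):ℂ)/2) = (F n : ℂ) := by
      have step1 : Hn n (((k:ℚ):ℂ)/2) = ((∫ t in Ioi t₀, g t *
          ((1 + (-1)^n * ε) * (gsL lN t)^n *
            Real.exp (kR/4*lN + (kR/2-1)*Real.log t)) : ℝ) : ℂ) := by
        rw [hHn]
        simp only
        have heq : (∫ t in Ioi t₀, (g t : ℂ) * gsPhi ε kR lN n (((k:ℚ):ℂ)/2) t)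
            = ∫ t in Ioi t₀, ((g t *
              ((1 + (-1)^n * ε) * (gsL lN t)^n *
                Real.exp (kR/4*lN + (kR/2-1)*Real.log t)) : ℝ) : ℂ) := by
          apply setIntegral_congr_fun measurableSet_Ioi
          intro t ht
          simp only
          rw [← hkC, gsPhi_center, ← Complex.ofReal_mul]
        rw [heq]
        exact integral_ofReal
      rw [step1]
      norm_cast
      rw [hF n, ← integral_const_mul]
      apply setIntegral_congr_fun measurableSet_Ioi
      intro t ht
      simp only
      have htpos : 0 < t := ht₀.trans ht
      have h2n : ((2:ℝ))^n ≠ 0 := by positivity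
      rw [Real.rpow_def_of_pos hNpos, Real.rpow_def_of_pos htpos]
      have hgs : (lN + 2 * Real.log t)^n = 2^n * (gsL lN t)^n := by
        rw [← mul_pow]
        congr 1
        unfold gsL
        ring
      rw [hgs, Real.exp_add, hgdef]
      simp only
      field_simp
      ring_nf
      rw [← hlNdef]
      push_cast
      ring
    rw [hΦ]
    simp only
    rw [hcenter]
    have hz : ∀ x : ℂ, x^(-(n:ℤ)-1) = (x^(n+1))⁻¹ := by
      intro x
      rw [show (-(n:ℤ)-1) = -((n+1:ℕ):ℤ) by push_cast; ring, zpow_neg, zpow_natCast]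
    rw [hz, hz]
    have hmk : (((k:ℚ):ℂ)/2 - ((k:ℚ):ℂ)) = -(((k:ℚ):ℂ)/2) := by ring
    rw [hmk, neg_pow ((((k:ℚ):ℂ))/2) (n+1)]
    have h2ne : (2:ℂ) ≠ 0 := two_ne_zero
    have hhalf : (((k:ℚ):ℂ)/2) ≠ 0 := by
      simp [hkCne]
    have hp : (((k:ℚ):ℂ)/2)^(n+1) ≠ 0 := pow_ne_zero _ hhalf
    have hkp : ((k:ℚ):ℂ)^(n+1) ≠ 0 := pow_ne_zero _ hkCne
    congr 1
    rcases Nat.even_or_odd n with hpar | hpar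
    · rw [hpar.neg_one_pow, (Even.add_one hpar).neg_one_pow]
      rw [neg_one_mul, inv_neg, div_pow, inv_div]
      field_simp
      ring
    · rw [hpar.neg_one_pow, (Odd.add_one hpar).neg_one_pow]
      rw [one_mul, div_pow, inv_div]
      field_simp
      ring
end

section
/- For every real x > 0 the equation x = (a·e^{L/j} + 3/4)·L has exactly one solution L(x) > 0, and lim_{x→∞} L(x) / (j·log(x/log x)) = 1. -/
/-!
Writing `u = L / s`, taking logarithms turns the equation into
`log x = u + log u + log s + log (a + b e^{-u})`, whose last term tends to `log a`.
So `u + log u = log x + O(1)`; since `log u = o(u)` this first gives `u ~ log x`, hence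
`log u = log log x + o(1)`, and then `u = log x - log log x + O(1) ~ log (x / log x)`.
-/

open Filter Topology Asymptotics Real

theorem strictMonoOn_mul_exp_div_add_mul {a b s : ℝ} (ha : 0 ≤ a) (hab : 0 < a + b) (hs : 0 ≤ s) :
    StrictMonoOn (fun L => (a * exp (L / s) + b) * L) (Set.Ici 0) := by
  intro L₁ hL₁ L₂ hL₂ hlt
  have hexp : exp (L₁ / s) ≤ exp (L₂ / s) := exp_le_exp.2 (by gcongr)
  have hone : 1 ≤ exp (L₂ / s) := one_le_exp (div_nonneg hL₂ hs)
  exact mul_lt_mul' (by gcongr) hlt hL₁ (by nlinarith)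

theorem existsUnique_pos_eq_mul_exp_div_add_mul {a b s x : ℝ} (ha : 0 ≤ a) (hab : 0 < a + b)
    (hs : 0 ≤ s) (hx : 0 < x) : ∃! L, 0 < L ∧ x = (a * exp (L / s) + b) * L := by
  set f := fun L => (a * exp (L / s) + b) * L
  have hmono : StrictMonoOn f (Set.Ici 0) := strictMonoOn_mul_exp_div_add_mul ha hab hs
  have hf0 : f 0 = 0 := by simp [f]
  have hM : 0 ≤ x / (a + b) := by positivity
  -- `f L ≥ (a + b) L` on `L ≥ 0`, so `f` reaches `x` before `x / (a + b)`.
  have hfM : x ≤ f (x / (a + b)) := by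
    have hone : 1 ≤ exp (x / (a + b) / s) := one_le_exp (div_nonneg hM hs)
    calc x = (a + b) * (x / (a + b)) := by field_simp
      _ ≤ f (x / (a + b)) := by simp only [f]; gcongr; nlinarith
  obtain ⟨L, hL, hfL⟩ := intermediate_value_Icc hM (by fun_prop : Continuous f).continuousOn
    ⟨by rw [hf0]; exact hx.le, hfM⟩
  have hLpos : 0 < L := hL.1.lt_of_ne (by rintro rfl; exact hx.ne' (hf0 ▸ hfL).symm)
  refine ⟨L, ⟨hLpos, hfL.symm⟩, fun L' ⟨hL'pos, hL'⟩ => ?_⟩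
  exact hmono.injOn (Set.mem_Ici.2 hL'pos.le) (Set.mem_Ici.2 hLpos.le) (hL'.symm.trans hfL.symm)

theorem isEquivalent_sub_log_of_isBigO_add_log_sub {α : Type*} {l : Filter α} {u T : α → ℝ}
    (hu : Tendsto u l atTop) (h : (fun x => u x + log (u x) - T x) =O[l] fun _ => (1 : ℝ)) :
    u ~[l] fun x => T x - log (T x) := by
  have hlog_u : (fun x => log (u x)) =o[l] u := isLittleO_log_id_atTop.comp_tendsto hu
  have hone_u : (fun _ => (1 : ℝ)) =o[l] u :=
    (isLittleO_one_left_iff ℝ).mpr (tendsto_norm_atTop_atTop.comp hu)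
  have hTu : T ~[l] u := by
    refine (hlog_u.sub (h.trans_isLittleO hone_u)).congr_left fun x => ?_
    simp only [Pi.sub_apply]
    ring
  have hT : Tendsto T l atTop := hTu.symm.tendsto_atTop hu
  have hlog_ratio : Tendsto (fun x => log (u x) - log (T x)) l (𝓝 0) := by
    have hratio : Tendsto (fun x => u x / T x) l (𝓝 1) :=
      (isEquivalent_iff_tendsto_one (hT.eventually_ne_atTop 0)).mp hTu.symm
    have := (continuousAt_log one_ne_zero).tendsto.comp hratio
    rw [log_one] at this
    refine this.congr' ?_
    filter_upwards [hu.eventually_gt_atTop 0, hT.eventually_gt_atTop 0] with x hux hTx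
    exact log_div hux.ne' hTx.ne'
  have hv : (fun x => T x - log (T x)) ~[l] T :=
    IsEquivalent.refl.sub_isLittleO (isLittleO_log_id_atTop.comp_tendsto hT)
  have hone_v : (fun _ => (1 : ℝ)) =o[l] fun x => T x - log (T x) :=
    (isLittleO_one_left_iff ℝ).mpr (tendsto_norm_atTop_atTop.comp (hv.symm.tendsto_atTop hT))
  refine ((h.sub (hlog_ratio.isBigO_one ℝ)).trans_isLittleO hone_v).congr_left fun x => ?_
  simp only [Pi.sub_apply]
  ring

theorem log_eq_of_eq_mul_exp_div_add_mul {a b s x L : ℝ} (hs : s ≠ 0) (hx : x ≠ 0)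
    (h : x = (a * exp (L / s) + b) * L) :
    log x = L / s + log (L / s) + log s + log (a + b * exp (-(L / s))) := by
  have hfac : x = (a + b * exp (-(L / s))) * exp (L / s) * (s * (L / s)) := by
    have hexp : exp (-(L / s)) * exp (L / s) = 1 := by rw [← exp_add, neg_add_cancel, exp_zero]
    rw [h, mul_div_cancel₀ L hs]
    linear_combination (-(b * L)) * hexp
  rw [hfac] at hx ⊢
  have hc : a + b * exp (-(L / s)) ≠ 0 := by
    intro h0; exact hx (by rw [h0]; ring)
  have hL : L / s ≠ 0 := by
    intro h0; exact hx (by rw [h0]; ring)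
  rw [log_mul (mul_ne_zero hc (exp_pos _).ne') (mul_ne_zero hs hL), log_mul hc (exp_pos _).ne',
    log_mul hs hL, log_exp]
  ring

theorem tendsto_div_mul_log_div_log_of_eq_mul_exp_div_add_mul {a b s : ℝ} (ha : 0 < a)
    (hb : 0 ≤ b) (hs : 0 < s) {L : ℝ → ℝ}
    (hL : ∀ x, 0 < x → 0 < L x ∧ x = (a * exp (L x / s) + b) * L x) :
    Tendsto (fun x => L x / (s * log (x / log x))) atTop (𝓝 1) := by
  set u := fun x => L x / s
  set c := fun x => log (a + b * exp (-u x))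
  have hlog : ∀ x, 0 < x → log x = u x + log (u x) + log s + c x := fun x hx =>
    log_eq_of_eq_mul_exp_div_add_mul hs.ne' hx.ne' (hL x hx).2
  have hu : Tendsto u atTop atTop := by
    -- `log u ≤ u` and `c ≤ log (a + b)` turn `hlog` into a linear lower bound for `u`.
    have hlin : Tendsto (fun x => (log x - log s - log (a + b)) / 2) atTop atTop :=
      ((tendsto_log_atTop.atTop_add tendsto_const_nhds).atTop_add
        tendsto_const_nhds).atTop_div_const two_pos
    refine tendsto_atTop_mono' atTop ?_ hlin
    filter_upwards [eventually_gt_atTop 0] with x hx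
    have hupos : 0 < u x := div_pos (hL x hx).1 hs
    have hexp : exp (-u x) ≤ 1 := exp_le_one_iff.2 (by linarith)
    have hc : c x ≤ log (a + b) := log_le_log (by positivity) (by nlinarith)
    have := log_le_sub_one_of_pos hupos
    linarith [hlog x hx]
  have hc : Tendsto c atTop (𝓝 (log a)) := by
    have := ((tendsto_exp_neg_atTop_nhds_zero.comp hu).const_mul b).const_add a
    rw [mul_zero, add_zero] at this
    exact this.log ha.ne'
  have hbound : (fun x => u x + log (u x) - log x) =O[atTop] fun _ => (1 : ℝ) := by
    refine ((hc.const_add (log s)).neg.isBigO_one ℝ).congr' ?_ EventuallyEq.rfl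
    filter_upwards [eventually_gt_atTop 0] with x hx
    rw [hlog x hx]
    ring
  have hequiv := isEquivalent_sub_log_of_isBigO_add_log_sub hu hbound
  have hratio := (isEquivalent_iff_tendsto_one
    ((hequiv.tendsto_atTop hu).eventually_ne_atTop 0)).mp hequiv
  refine hratio.congr' ?_
  filter_upwards [eventually_gt_atTop 1] with x hx
  rw [Pi.div_apply, log_div (by positivity) (log_pos hx).ne', div_mul_eq_div_div]

/-- For every `x > 0` the equation `x = (a e^{L/j} + 3/4) L` has
exactly one positive solution `L(x)`, and `L(x) ∼ j log(x / log x)` as `x → ∞`. -/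
theorem dedekind_saddle_point_solution
    (a : ℝ) (ha : 0 < a) (j : ℕ) (hj : 1 ≤ j) :
    (∀ x : ℝ, 0 < x → ∃! L : ℝ, 0 < L ∧
      x = (a * Real.exp (L / j) + 3 / 4) * L) ∧
    ∀ L : ℝ → ℝ,
      (∀ x : ℝ, 0 < x → 0 < L x ∧ x = (a * Real.exp (L x / j) + 3 / 4) * L x) →
      Tendsto (fun x : ℝ => L x / (j * Real.log (x / Real.log x))) atTop (nhds 1) := by
  have hj' : (0 : ℝ) < j := by exact_mod_cast hj
  exact ⟨fun x hx => existsUnique_pos_eq_mul_exp_div_add_mul ha.le (by linarith) hj'.le hx,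
    fun L hL => tendsto_div_mul_log_div_log_of_eq_mul_exp_div_add_mul ha (by norm_num) hj' hL⟩
end
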